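/- Let K be a nonempty compact Hausdorff topological space without isolated points, and let C(K) be the Banach space of real- or complex-valued continuous functions on K with the supremum norm. Then, with the kernel k(f,g) := ‖f−g‖_∞ on the unit sphere S_{C(K)}, the dual Chebyshev constant satisfies M̄(S_{C(K)}) = 2. -/

import Mathlib

/-!
Taking `n = 1` and `w₁ = 1` gives `M̄ ≤ 2`. Conversely, let `w₁, …, wₙ` lie on the unit sphere
and `b < 2`. Each open set `{|w_j| > b - 1}` is nonempty, hence infinite because `K` has no
isolated points, so it contains a point `y_j` with the `y_j` pairwise distinct. By Tietze, the
values `-w_j(y_j)/|w_j(y_j)|` extend to some `f` with `‖f‖ = 1`, and then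
`‖f - w_j‖ ≥ |f(y_j) - w_j(y_j)| = 1 + |w_j(y_j)| > b` for every `j`.
-/

open MeasureTheory ENNReal
open scoped BigOperators

namespace Rendezvous

variable {X : Type*}

/-- The `n`-th Chebyshev constant `Mₙ(H,L)` of `L` with respect to `H` for the kernel `k`. -/
noncomputable def chebMn (k : X → X → ℝ≥0∞) (n : ℕ) (H L : Set X) : ℝ≥0∞ :=
  ⨆ w : Fin n → H, ⨅ x : L, (∑ j, k (x : X) ((w j : X))) / (n : ℝ≥0∞)

/-- The `n`-th dual Chebyshev constant `M̄ₙ(H,L)`. -/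
noncomputable def chebMnDual (k : X → X → ℝ≥0∞) (n : ℕ) (H L : Set X) : ℝ≥0∞ :=
  ⨅ w : Fin n → H, ⨆ x : L, (∑ j, k (x : X) ((w j : X))) / (n : ℝ≥0∞)

/-- The Chebyshev constant `M(H,L) = sup_{n ≥ 1} Mₙ(H,L)`. -/
noncomputable def chebM (k : X → X → ℝ≥0∞) (H L : Set X) : ℝ≥0∞ :=
  ⨆ n : ℕ, ⨆ (_ : 1 ≤ n), chebMn k n H L

/-- The dual Chebyshev constant `M̄(H,L) = inf_{n ≥ 1} M̄ₙ(H,L)`. -/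
noncomputable def chebMDual (k : X → X → ℝ≥0∞) (H L : Set X) : ℝ≥0∞ :=
  ⨅ n : ℕ, ⨅ (_ : 1 ≤ n), chebMnDual k n H L

/-- The potential `U^μ(x) = ∫ k(x,y) dμ(y)` of a measure. -/
noncomputable def pot [MeasurableSpace X] (k : X → X → ℝ≥0∞) (μ : Measure X) (x : X) : ℝ≥0∞ :=
  ∫⁻ y, k x y ∂μ

/-- `μ` is a tight (inner regular w.r.t. compact sets) Borel probability measure
concentrated on `H`. -/
def TightProbOn [TopologicalSpace X] [MeasurableSpace X] (μ : Measure X) (H : Set X) : Prop :=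
  IsProbabilityMeasure μ ∧ μ.InnerRegular ∧ μ Hᶜ = 0

/-- The quasi-uniform energy `q(H,L) = inf_{μ ∈ M₁(H)} sup_{x ∈ L} U^μ(x)`. -/
noncomputable def qUp [TopologicalSpace X] [MeasurableSpace X] (k : X → X → ℝ≥0∞)
    (H L : Set X) : ℝ≥0∞ :=
  ⨅ (μ : Measure X) (_ : TightProbOn μ H), ⨆ x : L, pot k μ (x : X)

/-- The dual quasi-uniform energy `q̲(H,L) = sup_{μ ∈ M₁(H)} inf_{x ∈ L} U^μ(x)`. -/
noncomputable def qLow [TopologicalSpace X] [MeasurableSpace X] (k : X → X → ℝ≥0∞)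
    (H L : Set X) : ℝ≥0∞ :=
  ⨆ (μ : Measure X) (_ : TightProbOn μ H), ⨅ x : L, pot k μ (x : X)

end Rendezvous

open Rendezvous

open Set

theorem IsOpen.infinite_of_forall_not_isOpen_singleton {X : Type*} [TopologicalSpace X]
    [T1Space X] (hX : ∀ x : X, ¬IsOpen ({x} : Set X)) {U : Set X} (hU : IsOpen U)
    (hne : U.Nonempty) : U.Infinite := fun hfin ↦
  let ⟨x, hx⟩ := hne
  hX x (isOpen_singleton_of_finite_mem_nhds x (hU.mem_nhds hx) hfin)

theorem exists_injective_forall_mem_of_infinite {α : Type*} :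
    ∀ {n : ℕ} (s : Fin n → Set α), (∀ j, (s j).Infinite) →
      ∃ y : Fin n → α, Function.Injective y ∧ ∀ j, y j ∈ s j
  | 0, _, _ => ⟨Fin.elim0, fun i ↦ i.elim0, fun j ↦ j.elim0⟩
  | _ + 1, s, hs => by
    obtain ⟨y, hy_inj, hy_mem⟩ :=
      exists_injective_forall_mem_of_infinite (fun j ↦ s j.succ) fun j ↦ hs j.succ
    obtain ⟨y₀, hy₀_mem, hy₀_fresh⟩ := ((hs 0).sdiff (finite_range y)).nonempty
    exact ⟨Fin.cons y₀ y, Fin.cons_injective_iff.2 ⟨hy₀_fresh, hy_inj⟩,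
      Fin.cases hy₀_mem hy_mem⟩

theorem ContinuousMap.exists_forall_mem_closedBall_apply_eq {X : Type*} [TopologicalSpace X]
    [NormalSpace X] [T1Space X] {ι : Type*} [Finite ι] {y : ι → X} (hy : Function.Injective y)
    {𝕜 E : Type*} [RCLike 𝕜] [NormedAddCommGroup E] [NormedSpace 𝕜 E] [FiniteDimensional 𝕜 E]
    {c : ι → E} (hc : ∀ i, c i ∈ Metric.closedBall (0 : E) 1) :
    ∃ g : C(X, E), (∀ x, g x ∈ Metric.closedBall (0 : E) 1) ∧ ∀ i, g (y i) = c i := by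
  let e := Equiv.ofInjective y hy
  let f : C(range y, E) := ⟨fun x ↦ c (e.symm x), continuous_of_discreteTopology⟩
  obtain ⟨g, hg_mem, hg⟩ :=
    f.exists_forall_mem_restrict_eq (finite_range y).isClosed (fun x ↦ hc _)
  refine ⟨g, hg_mem, fun i ↦ ?_⟩
  simpa [f, e] using congr($hg ⟨y i, i, rfl⟩)

section NormalizeVector

variable {E : Type*} [NormedAddCommGroup E] [NormedSpace ℝ E] {a : E}

theorem norm_inv_norm_smul_self (ha : a ≠ 0) : ‖‖a‖⁻¹ • a‖ = 1 := by
  rw [norm_smul, norm_inv, norm_norm, inv_mul_cancel₀ (norm_ne_zero_iff.2 ha)]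

theorem norm_add_inv_norm_smul_self (ha : a ≠ 0) : ‖a + ‖a‖⁻¹ • a‖ = ‖a‖ + 1 := by
  rw [(SameRay.sameRay_nonneg_smul_right a (inv_nonneg.2 (norm_nonneg a))).norm_add,
    norm_inv_norm_smul_self ha]

end NormalizeVector

theorem ContinuousMap.exists_norm_eq_one_forall_lt_norm_sub {K : Type*} [TopologicalSpace K]
    [CompactSpace K] [T2Space K] (hK : ∀ x : K, ¬IsOpen ({x} : Set K)) {𝕜 : Type*} [RCLike 𝕜]
    {n : ℕ} (hn : n ≠ 0) (w : Fin n → C(K, 𝕜)) (hw : ∀ j, ‖w j‖ = 1) {b : ℝ} (hb : b < 2) :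
    ∃ f : C(K, 𝕜), ‖f‖ = 1 ∧ ∀ j, b < ‖f - w j‖ := by
  -- the `0` keeps `w j (y j) ≠ 0` when `b < 1`
  set m := max (b - 1) 0
  have hm : m < 1 := max_lt (by linarith) one_pos
  have hU : ∀ j, {x | m < ‖w j x‖}.Infinite := fun j ↦ by
    obtain ⟨x, hx⟩ : ∃ x, m < ‖w j x‖ := by
      by_contra! h
      linarith [hw j, ((w j).norm_le (le_max_right _ _)).2 h]
    exact (isOpen_lt continuous_const (map_continuous (w j)).norm
      ).infinite_of_forall_not_isOpen_singleton hK ⟨x, hx⟩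
  obtain ⟨y, hy_inj, hy⟩ := exists_injective_forall_mem_of_infinite _ hU
  have hy_ne : ∀ j, w j (y j) ≠ 0 := fun j ↦
    norm_pos_iff.1 ((le_max_right _ _).trans_lt (hy j))
  obtain ⟨f, hf_ball, hf⟩ := exists_forall_mem_closedBall_apply_eq (𝕜 := 𝕜) hy_inj
    (c := fun j ↦ -(‖w j (y j)‖⁻¹ • w j (y j)))
    fun j ↦ by simp [norm_inv_norm_smul_self (hy_ne _)]
  refine ⟨f, le_antisymm ((f.norm_le zero_le_one).2 fun x ↦ by simpa using hf_ball x) ?_,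
    fun j ↦ ?_⟩
  · simpa [hf, norm_inv_norm_smul_self (hy_ne _)]
      using f.norm_coe_le_norm (y ⟨0, Nat.pos_of_ne_zero hn⟩)
  · calc b < ‖w j (y j)‖ + 1 := by
          linarith [le_max_left (b - 1) 0, show m < ‖w j (y j)‖ from hy j]
      _ = ‖f (y j) - w j (y j)‖ := by
        rw [hf, neg_sub_left, norm_neg, norm_add_inv_norm_smul_self (hy_ne j)]
      _ ≤ ‖f - w j‖ := (f - w j).norm_coe_le_norm (y j)

namespace Rendezvous

variable {X : Type*} {k : X → X → ℝ≥0∞} {H L : Set X}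

theorem chebMDual_le_iSup_of_mem {h : X} (hh : h ∈ H) : chebMDual k H L ≤ ⨆ x : L, k x h :=
  (iInf₂_le 1 le_rfl).trans <| (iInf_le _ fun _ ↦ ⟨h, hh⟩).trans <| by simp

theorem le_chebMnDual_of_forall_exists {n : ℕ} (hn : n ≠ 0) {c : ℝ≥0∞}
    (h : ∀ w : Fin n → H, ∀ b < c, ∃ x ∈ L, ∀ j, b ≤ k x (w j)) :
    c ≤ chebMnDual k n H L := by
  refine le_iInf fun w ↦ le_of_forall_lt_imp_le_of_dense fun b hb ↦ ?_
  obtain ⟨x, hx, hbx⟩ := h w b hb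
  calc b = (∑ _j : Fin n, b) / n := by
        rw [Finset.sum_const, Finset.card_univ, Fintype.card_fin, nsmul_eq_mul, mul_comm,
          ENNReal.mul_div_cancel_right (Nat.cast_ne_zero.2 hn) (ENNReal.natCast_ne_top n)]
    _ ≤ (∑ j, k x (w j)) / n := by gcongr with j; exact hbx j
    _ ≤ ⨆ x : L, (∑ j, k x (w j)) / n := le_iSup_of_le ⟨x, hx⟩ le_rfl

end Rendezvous

/-- For a nonempty compact Hausdorff space `K` without isolated points,
and `C(K)` the Banach space of real- or complex-valued continuous functions with the
supremum norm, the dual Chebyshev constant of the unit sphere is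
`M̄(S_{C(K)}) = 2` (kernel `k(f,g) = ‖f-g‖_∞`). -/
theorem chebMDual_sphere_continuousMap_eq_two {K : Type*} [TopologicalSpace K]
    [CompactSpace K] [T2Space K] [Nonempty K]
    (hniso : ∀ x : K, ¬ IsOpen ({x} : Set K))
    {𝕜 : Type*} [RCLike 𝕜] :
    chebMDual (fun f g : C(K, 𝕜) => edist f g)
      {f : C(K, 𝕜) | ‖f‖ = 1} {f : C(K, 𝕜) | ‖f‖ = 1} = 2 := by
  have hone : (1 : C(K, 𝕜)) ∈ {f : C(K, 𝕜) | ‖f‖ = 1} := norm_one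
  refine le_antisymm ((chebMDual_le_iSup_of_mem hone).trans (iSup_le fun f ↦ ?_))
    (le_iInf₂ fun n hn ↦ le_chebMnDual_of_forall_exists (by omega) fun w b hb ↦ ?_)
  · rw [edist_dist, dist_eq_norm]
    refine ENNReal.ofReal_le_of_le_toReal ?_
    calc ‖(f : C(K, 𝕜)) - 1‖ ≤ ‖(f : C(K, 𝕜))‖ + ‖(1 : C(K, 𝕜))‖ := norm_sub_le _ _
      _ = (2 : ℝ≥0∞).toReal := by rw [f.2, norm_one]; norm_num
  · have hb_top : b ≠ ⊤ := hb.ne_top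
    obtain ⟨f, hf, hfw⟩ := ContinuousMap.exists_norm_eq_one_forall_lt_norm_sub hniso (by omega)
      (fun j ↦ (w j : C(K, 𝕜))) (fun j ↦ (w j).2) (b := b.toReal)
      (ENNReal.toReal_lt_of_lt_ofReal (by simpa using hb))
    refine ⟨f, hf, fun j ↦ ?_⟩
    rw [edist_dist, dist_eq_norm, ENNReal.le_ofReal_iff_toReal_le hb_top (norm_nonneg _)]
    exact (hfw j).le
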